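/- arXiv:1811.12527 — 2 statements merged into one kernel-verified Lean document; each statement's English description precedes it below -/
import Mathlib

section
/- Suppose there exists u ∈ U such that for every v ∈ V there is a coordinate c with u[c] = v[c] = w[c] = 1. Then in the radius-construction graph G_rad, the identified vertex u^0 has eccentricity at most 4a+1; that is, for every vertex z of G_rad there is a walk between u^0 and z of length at most 4a+1. In particular the radius of G_rad is at most 4a+1. -/
/-!
Every `u'^a` is within `3a` of `u^0`, through `u^a` and `x` on the same side. For each
`v ∈ V`, the coordinate `c` with `u[c] = v[c] = w[c] = 1` gives the walk
`u^0, u^a, c_U, c_V, v^0` of length `3a + 1`. Every other vertex lies on an added path of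
length at most `a` that ends at one of these vertices, whence the bound `4a + 1`.
-/

namespace RadConstr

variable {B P : Type*}

/-- Vertices of a graph assembled from base vertices `B` and, for each path request
`p : P` of length `L p`, the `L p - 1` internal vertices of the path. -/
abbrev Vert (B P : Type*) (L : P → ℕ) : Type _ := B ⊕ (Σ p : P, Fin (L p - 1))

/-- `pos e0 e1 L p i z` : `z` is the `i`-th vertex along the path `p`
(whose endpoints are `e0 p` and `e1 p` and whose length is `L p`). -/
def pos (e0 e1 : P → B) (L : P → ℕ) (p : P) (i : ℕ) (z : Vert B P L) : Prop :=
  (i = 0 ∧ z = Sum.inl (e0 p)) ∨ (i = L p ∧ z = Sum.inl (e1 p)) ∨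
    (∃ h : i - 1 < L p - 1, 0 < i ∧ i < L p ∧ z = Sum.inr ⟨p, ⟨i - 1, h⟩⟩)

/-- The graph obtained from the base vertex set `B` by adding, for each `p : P`, an
internally vertex-disjoint path of length `L p` between the vertices `e0 p` and
`e1 p` (for `L p = 1` this is just an edge). -/
def pathGraph (e0 e1 : P → B) (L : P → ℕ) : SimpleGraph (Vert B P L) where
  Adj x y := x ≠ y ∧ ∃ p i, i < L p ∧
    ((pos e0 e1 L p i x ∧ pos e0 e1 L p (i + 1) y) ∨
     (pos e0 e1 L p i y ∧ pos e0 e1 L p (i + 1) x))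
  symm := ⟨by
    rintro x y ⟨hne, p, i, hi, h⟩
    exact ⟨hne.symm, p, i, hi, h.symm⟩⟩
  loopless := ⟨fun x h => h.1 rfl⟩

/-- Base (named) vertices of the radius-construction graph `G_rad`: two copies
(`side = false` is the left copy, `side = true` the right copy) of the base vertices
of `G(U,V,w,a)`, with the vertices `u^0` of the two copies identified. -/
inductive Base (ℓ : ℕ) (U V : Set (Fin ℓ → Bool)) : Type
  | cU (side : Bool) (c : Fin ℓ)
  | cV (side : Bool) (c : Fin ℓ)
  | u0 (u : U)                       -- shared between the two copies
  | ua (side : Bool) (u : U)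
  | v0 (side : Bool) (v : V)
  | va (side : Bool) (v : V)
  | x (side : Bool)
  | y (side : Bool)

/-- Path requests of the radius-construction graph `G_rad` (each request of
`G(U,V,w,a)` appears once per side). -/
inductive Pth (ℓ : ℕ) (U V : Set (Fin ℓ → Bool)) (w : Fin ℓ → Bool) : Type
  | upath (side : Bool) (u : U)                                 -- u^0 … u^a, length a
  | vpath (side : Bool) (v : V)                                 -- v^0 … v^a, length a
  | uc (side : Bool) (u : U) (c : Fin ℓ) (h : u.1 c = true)     -- u^a — c_U, length a
  | vc (side : Bool) (v : V) (c : Fin ℓ) (h : v.1 c = true)     -- c_V — v^0, length a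
  | wc (side : Bool) (c : Fin ℓ) (h : w c = true)               -- edge c_U — c_V
  | xu (side : Bool) (u : U)                                    -- x — u^a, length a
  | yv (side : Bool) (v : V)                                    -- y — v^0, length a

variable {ℓ : ℕ} {U V : Set (Fin ℓ → Bool)} {w : Fin ℓ → Bool}

/-- First endpoint of each path request. -/
def e0 : Pth ℓ U V w → Base ℓ U V
  | .upath _ u => .u0 u
  | .vpath s v => .v0 s v
  | .uc s u _ _ => .ua s u
  | .vc s _ c _ => .cV s c
  | .wc s c _ => .cU s c
  | .xu s _ => .x s
  | .yv s _ => .y s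

/-- Second endpoint of each path request. -/
def e1 : Pth ℓ U V w → Base ℓ U V
  | .upath s u => .ua s u
  | .vpath s v => .va s v
  | .uc s _ c _ => .cU s c
  | .vc s v _ _ => .v0 s v
  | .wc s c _ => .cV s c
  | .xu s u => .ua s u
  | .yv s v => .v0 s v

/-- Length of each path request: the `c_U — c_V` connections are single edges,
all other paths have length `a`. -/
def len (a : ℕ) : Pth ℓ U V w → ℕ
  | .wc _ _ _ => 1
  | _ => a

/-- The radius-construction graph `G_rad`: two copies of `G(U,V,w,a)` with the
vertices `u^0` identified. -/
def Grad (a ℓ : ℕ) (U V : Set (Fin ℓ → Bool)) (w : Fin ℓ → Bool) :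
    SimpleGraph (Vert (Base ℓ U V) (Pth ℓ U V w) (len a)) :=
  pathGraph e0 e1 (len a)

end RadConstr

theorem SimpleGraph.exists_walk_length_le_of_edist_le {α : Type*} {G : SimpleGraph α}
    {u v : α} {n : ℕ} (h : G.edist u v ≤ n) : ∃ p : G.Walk u v, p.length ≤ n := by
  obtain ⟨p, hp⟩ := exists_walk_of_edist_ne_top (h.trans_lt (ENat.natCast_lt_top n)).ne
  exact ⟨p, by exact_mod_cast hp.le.trans h⟩

theorem SimpleGraph.edist_le_of_le_add {α : Type*} {G : SimpleGraph α} {u v z : α}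
    {m n k : ℕ} (huv : G.edist u v ≤ m) (hvz : G.edist v z ≤ n) (h : m + n ≤ k) :
    G.edist u z ≤ k :=
  G.edist_triangle.trans <| (add_le_add huv hvz).trans (by exact_mod_cast h)

namespace RadConstr

open SimpleGraph

section PathGraph

variable {B P : Type*} {e0 e1 : P → B} {L : P → ℕ}

theorem pos.le {p : P} {i : ℕ} {z : Vert B P L} (h : pos e0 e1 L p i z) : i ≤ L p := by
  rcases h with ⟨rfl, -⟩ | ⟨rfl, -⟩ | ⟨-, -, hi, -⟩ <;> omega

theorem exists_pos (p : P) {i : ℕ} (hi : i ≤ L p) : ∃ z, pos e0 e1 L p i z := by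
  rcases Nat.eq_zero_or_pos i with rfl | h0
  · exact ⟨_, Or.inl ⟨rfl, rfl⟩⟩
  rcases hi.eq_or_lt with rfl | hlt
  · exact ⟨_, Or.inr (Or.inl ⟨rfl, rfl⟩)⟩
  · exact ⟨_, Or.inr (Or.inr ⟨by omega, h0, hlt, rfl⟩)⟩

theorem pathGraph_adj_of_pos {p : P} (hne : e0 p ≠ e1 p) {i : ℕ} {z z' : Vert B P L}
    (h : pos e0 e1 L p i z) (h' : pos e0 e1 L p (i + 1) z') :
    (pathGraph e0 e1 L).Adj z z' := by
  refine ⟨?_, p, i, h'.le, Or.inl ⟨h, h'⟩⟩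
  rcases h with ⟨hi, rfl⟩ | ⟨hi, rfl⟩ | ⟨_, _, _, rfl⟩ <;>
    rcases h' with ⟨hi', rfl⟩ | ⟨hi', rfl⟩ | ⟨_, _, _, rfl⟩ <;>
      (simp_all; try omega)

theorem edist_e0_le_of_pos {p : P} (hne : e0 p ≠ e1 p) (hL : 0 < L p) {i : ℕ}
    {z : Vert B P L} (h : pos e0 e1 L p i z) :
    (pathGraph e0 e1 L).edist (Sum.inl (e0 p)) z ≤ i := by
  induction i generalizing z with
  | zero =>
    rcases h with ⟨-, rfl⟩ | ⟨h0, -⟩ | ⟨-, h0, -⟩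
    · simp
    all_goals omega
  | succ i ih =>
    obtain ⟨z', hz'⟩ : ∃ z', pos e0 e1 L p i z' := exists_pos p (Nat.le_of_succ_le h.le)
    exact edist_le_of_le_add (ih hz')
      (edist_eq_one_iff_adj.mpr (pathGraph_adj_of_pos hne hz' h)).le le_rfl

theorem edist_e1_le_of_pos {p : P} (hne : e0 p ≠ e1 p) (hL : 0 < L p) {i : ℕ}
    {z : Vert B P L} (h : pos e0 e1 L p i z) :
    (pathGraph e0 e1 L).edist z (Sum.inl (e1 p)) ≤ L p - i := by
  obtain ⟨k, hk⟩ : ∃ k, L p = i + k := Nat.exists_eq_add_of_le h.le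
  induction k generalizing i z with
  | zero =>
    rcases h with ⟨rfl, -⟩ | ⟨-, rfl⟩ | ⟨-, -, hi, -⟩
    · omega
    · simp
    · omega
  | succ k ih =>
    obtain ⟨z', hz'⟩ : ∃ z', pos e0 e1 L p (i + 1) z' := exists_pos p (by omega)
    exact edist_le_of_le_add (edist_eq_one_iff_adj.mpr (pathGraph_adj_of_pos hne h hz')).le
      (ih hz' (by omega)) (by omega)

end PathGraph

section Grad

variable {a ℓ : ℕ} {U V : Set (Fin ℓ → Bool)} {w : Fin ℓ → Bool}

theorem e0_ne_e1 (p : Pth ℓ U V w) : e0 p ≠ e1 p := by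
  cases p <;> simp [e0, e1]

theorem len_pos (ha : 0 < a) (p : Pth ℓ U V w) : 0 < len a p := by
  cases p <;> simp [len, ha]

theorem len_le (ha : 0 < a) (p : Pth ℓ U V w) : len a p ≤ a := by
  cases p <;> simp [len, Nat.succ_le_of_lt ha]

theorem grad_edist_e0_e1_le (ha : 0 < a) (p : Pth ℓ U V w) :
    (Grad a ℓ U V w).edist (Sum.inl (e0 p)) (Sum.inl (e1 p)) ≤ len a p :=
  edist_e0_le_of_pos (e0_ne_e1 p) (len_pos ha p) (Or.inr (Or.inl ⟨rfl, rfl⟩))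

theorem grad_edist_e1_e0_le (ha : 0 < a) (p : Pth ℓ U V w) :
    (Grad a ℓ U V w).edist (Sum.inl (e1 p)) (Sum.inl (e0 p)) ≤ len a p :=
  edist_comm.trans_le (grad_edist_e0_e1_le ha p)

theorem pos_inr (p : Pth ℓ U V w) (j : Fin (len a p - 1)) :
    pos e0 e1 (len a) p (j + 1) (Sum.inr ⟨p, j⟩) :=
  Or.inr (Or.inr ⟨by simp, by omega, by omega, rfl⟩)

theorem grad_edist_e0_inr_le (ha : 0 < a) (p : Pth ℓ U V w) (j : Fin (len a p - 1)) :
    (Grad a ℓ U V w).edist (Sum.inl (e0 p)) (Sum.inr ⟨p, j⟩) ≤ a :=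
  (edist_e0_le_of_pos (e0_ne_e1 p) (len_pos ha p) (pos_inr p j)).trans
    (by have := len_le ha p; norm_cast; omega)

theorem grad_edist_e1_inr_le (ha : 0 < a) (p : Pth ℓ U V w) (j : Fin (len a p - 1)) :
    (Grad a ℓ U V w).edist (Sum.inl (e1 p)) (Sum.inr ⟨p, j⟩) ≤ a :=
  edist_comm.trans_le <| (edist_e1_le_of_pos (e0_ne_e1 p) (len_pos ha p) (pos_inr p j)).trans
    (by have := len_le ha p; norm_cast; omega)

theorem grad_edist_u0_x_le (ha : 0 < a) (u₀ : U) (s : Bool) :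
    (Grad a ℓ U V w).edist (Sum.inl (.u0 u₀)) (Sum.inl (.x s)) ≤ ↑(2 * a) :=
  edist_le_of_le_add (grad_edist_e0_e1_le ha (.upath s u₀)) (grad_edist_e1_e0_le ha (.xu s u₀))
    (by simp only [len]; omega)

theorem grad_edist_u0_ua_le (ha : 0 < a) (u₀ u : U) (s : Bool) :
    (Grad a ℓ U V w).edist (Sum.inl (.u0 u₀)) (Sum.inl (.ua s u)) ≤ ↑(3 * a) :=
  edist_le_of_le_add (grad_edist_u0_x_le ha u₀ s) (grad_edist_e0_e1_le ha (.xu s u))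
    (by simp only [len]; omega)

theorem grad_edist_u0_v0_le (ha : 0 < a) {u₀ : U}
    (hhit : ∀ v ∈ V, ∃ c, u₀.1 c = true ∧ v c = true ∧ w c = true) (v : V) (s : Bool) :
    (Grad a ℓ U V w).edist (Sum.inl (.u0 u₀)) (Sum.inl (.v0 s v)) ≤ ↑(3 * a + 1) := by
  obtain ⟨c, huc, hvc, hwc⟩ := hhit v v.2
  have hcU : (Grad a ℓ U V w).edist (Sum.inl (.u0 u₀)) (Sum.inl (.cU s c)) ≤ ↑(2 * a) :=
    edist_le_of_le_add (grad_edist_e0_e1_le ha (.upath s u₀))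
      (grad_edist_e0_e1_le ha (.uc s u₀ c huc)) (by simp only [len]; omega)
  have hcV : (Grad a ℓ U V w).edist (Sum.inl (.u0 u₀)) (Sum.inl (.cV s c)) ≤ ↑(2 * a + 1) :=
    edist_le_of_le_add hcU (grad_edist_e0_e1_le ha (.wc s c hwc)) le_rfl
  exact edist_le_of_le_add hcV (grad_edist_e0_e1_le ha (.vc s v c hvc))
    (by simp only [len]; omega)

theorem grad_edist_u0_inl_le (ha : 0 < a) (hV : V.Nonempty)
    (hUcov : ∀ c : Fin ℓ, ∃ u ∈ U, u c = true) (hVcov : ∀ c : Fin ℓ, ∃ v ∈ V, v c = true)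
    {u₀ : U} (hhit : ∀ v ∈ V, ∃ c, u₀.1 c = true ∧ v c = true ∧ w c = true) (b : Base ℓ U V) :
    (Grad a ℓ U V w).edist (Sum.inl (.u0 u₀)) (Sum.inl b) ≤ ↑(4 * a + 1) := by
  have hua := grad_edist_u0_ua_le (V := V) (w := w) ha u₀
  have hv0 := grad_edist_u0_v0_le ha hhit
  cases b with
  | cU s c =>
    obtain ⟨u, hu, hc⟩ := hUcov c
    exact edist_le_of_le_add (hua ⟨u, hu⟩ s) (grad_edist_e0_e1_le ha (.uc s ⟨u, hu⟩ c hc))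
      (by simp only [len]; omega)
  | cV s c =>
    obtain ⟨v, hv, hc⟩ := hVcov c
    exact edist_le_of_le_add (hv0 ⟨v, hv⟩ s) (grad_edist_e1_e0_le ha (.vc s ⟨v, hv⟩ c hc))
      (by simp only [len]; omega)
  | u0 u =>
    exact edist_le_of_le_add (hua u false) (grad_edist_e1_e0_le ha (.upath false u))
      (by simp only [len]; omega)
  | ua s u => exact (hua u s).trans (Nat.cast_le.mpr (by omega))
  | v0 s v => exact (hv0 v s).trans (Nat.cast_le.mpr (by omega))
  | va s v =>
    exact edist_le_of_le_add (hv0 v s) (grad_edist_e0_e1_le ha (.vpath s v))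
      (by simp only [len]; omega)
  | x s => exact (grad_edist_u0_x_le ha u₀ s).trans (Nat.cast_le.mpr (by omega))
  | y s =>
    obtain ⟨v, hv⟩ := hV
    exact edist_le_of_le_add (hv0 ⟨v, hv⟩ s) (grad_edist_e1_e0_le ha (.yv s ⟨v, hv⟩))
      (by simp only [len]; omega)

theorem grad_edist_u0_inr_le (ha : 0 < a) {u₀ : U}
    (hhit : ∀ v ∈ V, ∃ c, u₀.1 c = true ∧ v c = true ∧ w c = true)
    (p : Pth ℓ U V w) (j : Fin (len a p - 1)) :
    (Grad a ℓ U V w).edist (Sum.inl (.u0 u₀)) (Sum.inr ⟨p, j⟩) ≤ ↑(4 * a + 1) := by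
  have hua := grad_edist_u0_ua_le (V := V) (w := w) ha u₀
  have hv0 := grad_edist_u0_v0_le ha hhit
  cases p with
  | upath s u => exact edist_le_of_le_add (hua u s) (grad_edist_e1_inr_le ha _ j) (by omega)
  | vpath s v => exact edist_le_of_le_add (hv0 v s) (grad_edist_e0_inr_le ha _ j) (by omega)
  | uc s u => exact edist_le_of_le_add (hua u s) (grad_edist_e0_inr_le ha _ j) (by omega)
  | vc s v => exact edist_le_of_le_add (hv0 v s) (grad_edist_e1_inr_le ha _ j) (by omega)
  | wc => exact j.elim0
  | xu s u =>
    exact edist_le_of_le_add (grad_edist_u0_x_le ha u₀ s) (grad_edist_e0_inr_le ha _ j)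
      (by omega)
  | yv s v => exact edist_le_of_le_add (hv0 v s) (grad_edist_e1_inr_le ha _ j) (by omega)

theorem grad_eccent_u0_le (ha : 0 < a) (hV : V.Nonempty)
    (hUcov : ∀ c : Fin ℓ, ∃ u ∈ U, u c = true) (hVcov : ∀ c : Fin ℓ, ∃ v ∈ V, v c = true)
    {u₀ : U} (hhit : ∀ v ∈ V, ∃ c, u₀.1 c = true ∧ v c = true ∧ w c = true) :
    (Grad a ℓ U V w).eccent (Sum.inl (.u0 u₀)) ≤ ↑(4 * a + 1) := by
  refine (eccent_le_iff _ _).mpr ?_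
  rintro (b | ⟨p, j⟩)
  · exact grad_edist_u0_inl_le ha hV hUcov hVcov hhit b
  · exact grad_edist_u0_inr_le ha hhit p j

end Grad

end RadConstr

open RadConstr in
theorem radius_construction_yes_case_general
    (a ℓ : ℕ) (ha : 0 < a)
    (U V : Set (Fin ℓ → Bool))
    (hV : V.Nonempty) (w : Fin ℓ → Bool)
    (hUcov : ∀ c : Fin ℓ, ∃ u ∈ U, u c = true)
    (hVcov : ∀ c : Fin ℓ, ∃ v ∈ V, v c = true)
    (u : Fin ℓ → Bool) (hu : u ∈ U)
    (hhit : ∀ v ∈ V, ∃ c, u c = true ∧ v c = true ∧ w c = true) :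
    ∀ z : Vert (Base ℓ U V) (Pth ℓ U V w) (len a),
      ∃ p : (Grad a ℓ U V w).Walk (Sum.inl (Base.u0 ⟨u, hu⟩)) z, p.length ≤ 4 * a + 1 :=
  fun _ ↦ SimpleGraph.exists_walk_length_le_of_edist_le <|
    SimpleGraph.edist_le_eccent.trans (grad_eccent_u0_le (u₀ := ⟨u, hu⟩) ha hV hUcov hVcov hhit)

open RadConstr in
theorem radius_construction_yes_case
    (a ℓ : ℕ) (ha : 0 < a) (hℓ : 0 < ℓ)
    (U V : Set (Fin ℓ → Bool)) (hUfin : U.Finite) (hVfin : V.Finite)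
    (hU : U.Nonempty) (hV : V.Nonempty) (w : Fin ℓ → Bool)
    (hUone : ∀ u ∈ U, ∃ c, u c = true) (hVone : ∀ v ∈ V, ∃ c, v c = true)
    (hUcov : ∀ c : Fin ℓ, ∃ u ∈ U, u c = true)
    (hVcov : ∀ c : Fin ℓ, ∃ v ∈ V, v c = true)
    (u : Fin ℓ → Bool) (hu : u ∈ U)
    (hhit : ∀ v ∈ V, ∃ c, u c = true ∧ v c = true ∧ w c = true) :
    ∀ z : Vert (Base ℓ U V) (Pth ℓ U V w) (len a),
      ∃ p : (Grad a ℓ U V w).Walk (Sum.inl (Base.u0 ⟨u, hu⟩)) z, p.length ≤ 4 * a + 1 :=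
  radius_construction_yes_case_general a ℓ ha U V hV w hUcov hVcov u hu hhit
end

section
/- Suppose that for every u ∈ U there exists a coordinate c with u[c] = v[c] = 1. Then in the 2-OV graph H(U,v,a), the eccentricity of s is exactly 2a+1, and the diameter of H(U,v,a) is at most 4a+2. -/
/-!
2-OV graph `H(U,v,a)` (Theorem 3.4, "yes" case): if every `u ∈ U` shares a
coordinate `c` with `u[c] = v[c] = 1`, then the eccentricity of `s` is exactly
`2a+1` and the diameter of `H(U,v,a)` is at most `4a+2`.
-/

namespace OVConstr

variable {B P : Type*}

/-- Vertices of a graph assembled from base vertices `B` and, for each path request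
`p : P` of length `L p`, the `L p - 1` internal vertices of the path. -/
abbrev Vert (B P : Type*) (L : P → ℕ) : Type _ := B ⊕ (Σ p : P, Fin (L p - 1))

/-- `pos e0 e1 L p i z` : `z` is the `i`-th vertex along the path `p`
(whose endpoints are `e0 p` and `e1 p` and whose length is `L p`). -/
def pos (e0 e1 : P → B) (L : P → ℕ) (p : P) (i : ℕ) (z : Vert B P L) : Prop :=
  (i = 0 ∧ z = Sum.inl (e0 p)) ∨ (i = L p ∧ z = Sum.inl (e1 p)) ∨
    (∃ h : i - 1 < L p - 1, 0 < i ∧ i < L p ∧ z = Sum.inr ⟨p, ⟨i - 1, h⟩⟩)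

/-- The graph obtained from the base vertex set `B` by adding, for each `p : P`, an
internally vertex-disjoint path of length `L p` between the vertices `e0 p` and
`e1 p` (for `L p = 1` this is just an edge). -/
def pathGraph (e0 e1 : P → B) (L : P → ℕ) : SimpleGraph (Vert B P L) where
  Adj x y := x ≠ y ∧ ∃ p i, i < L p ∧
    ((pos e0 e1 L p i x ∧ pos e0 e1 L p (i + 1) y) ∨
     (pos e0 e1 L p i y ∧ pos e0 e1 L p (i + 1) x))
  symm := by
    constructor
    rintro x y ⟨hne, p, i, hi, h⟩
    exact ⟨hne.symm, p, i, hi, h.symm⟩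
  loopless := ⟨fun x h => h.1 rfl⟩

/-- Base (named) vertices of the 2-OV graph `H(U,v,a)`. -/
inductive Base (ℓ : ℕ) (U : Set (Fin ℓ → Bool)) : Type
  | s
  | cL (c : Fin ℓ)
  | cR (c : Fin ℓ)
  | uL0 (u : U)
  | uLa (u : U)
  | uR0 (u : U)
  | uRa (u : U)

/-- Path requests of the 2-OV graph `H(U,v,a)`. -/
inductive Pth (ℓ : ℕ) (U : Set (Fin ℓ → Bool)) (v : Fin ℓ → Bool) : Type
  | scL (c : Fin ℓ)                                    -- s — c_left, length 2a
  | scR (c : Fin ℓ)                                    -- s — c_right, length 2a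
  | uLpath (u : U)                                     -- u_left^0 … u_left^a, length a
  | uRpath (u : U)                                     -- u_right^0 … u_right^a, length a
  | ucL (u : U) (c : Fin ℓ) (h : u.1 c = true)         -- u_left^a — c_left, length a
  | ucR (u : U) (c : Fin ℓ) (h : u.1 c = true)         -- u_right^a — c_right, length a
  | vcL (c : Fin ℓ) (h : v c = true)                   -- edge s — c_left
  | vcR (c : Fin ℓ) (h : v c = true)                   -- edge s — c_right

variable {ℓ : ℕ} {U : Set (Fin ℓ → Bool)} {v : Fin ℓ → Bool}

/-- First endpoint of each path request. -/
def e0 : Pth ℓ U v → Base ℓ U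
  | .scL _ => .s
  | .scR _ => .s
  | .uLpath u => .uL0 u
  | .uRpath u => .uR0 u
  | .ucL u _ _ => .uLa u
  | .ucR u _ _ => .uRa u
  | .vcL _ _ => .s
  | .vcR _ _ => .s

/-- Second endpoint of each path request. -/
def e1 : Pth ℓ U v → Base ℓ U
  | .scL c => .cL c
  | .scR c => .cR c
  | .uLpath u => .uLa u
  | .uRpath u => .uRa u
  | .ucL _ c _ => .cL c
  | .ucR _ c _ => .cR c
  | .vcL c _ => .cL c
  | .vcR c _ => .cR c

/-- Length of each path request: the `s — c_left`/`s — c_right` paths have length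
`2a`, the `v`-edges have length `1`, all other paths have length `a`. -/
def len (a : ℕ) : Pth ℓ U v → ℕ
  | .scL _ => 2 * a
  | .scR _ => 2 * a
  | .vcL _ _ => 1
  | .vcR _ _ => 1
  | _ => a

/-- The 2-OV graph `H(U,v,a)`. -/
def H (a ℓ : ℕ) (U : Set (Fin ℓ → Bool)) (v : Fin ℓ → Bool) :
    SimpleGraph (Vert (Base ℓ U) (Pth ℓ U v) (len a)) :=
  pathGraph e0 e1 (len a)

/-- The eccentricity (in `ℕ∞`) of a vertex `z`: the supremum of the distances from
`z` to all vertices. -/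
noncomputable def ecc (a ℓ : ℕ) (U : Set (Fin ℓ → Bool)) (v : Fin ℓ → Bool)
    (z : Vert (Base ℓ U) (Pth ℓ U v) (len a)) : ℕ∞ :=
  ⨆ y, (H a ℓ U v).edist z y

end OVConstr

/-!
Every base vertex `b` of `H(U,v,a)` is within `r b` of `s` (`r` = `0`, `2a`, `a+1`, `2a+1` at
`s`, `c_left`, `u_left^a`, `u_left^0`, using the shortcut `s — c_left — u_left^a` through a
coordinate shared by `u` and `v`), and every path between base vertices `b, b'` has length at most
`2(2a+1) - r b - r b'`, so its internal vertices are within `2a+1` as well; the diameter bound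
follows through `s`. Conversely, a potential on the vertices that grows by at most one per edge
and is `0` at `s` and `2a+1` at `u_left^0` shows that `u_left^0` is at distance exactly `2a+1`.
-/

namespace SimpleGraph

variable {V : Type*} (G : SimpleGraph V)

theorem edist_le_of_le_add_s8 {x y z : V} {m n k : ℕ} (hxz : G.edist x z ≤ m)
    (hzy : G.edist z y ≤ n) (hk : m + n ≤ k) : G.edist x y ≤ k :=
  G.edist_triangle.trans <| (add_le_add hxz hzy).trans <| by exact_mod_cast hk

theorem le_add_edist_of_adj_le (φ : V → ℕ) (hφ : ∀ x y, G.Adj x y → φ y ≤ φ x + 1) (x y : V) :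
    (φ y : ℕ∞) ≤ φ x + G.edist x y := by
  have walk_bound : ∀ {x y : V} (w : G.Walk x y), φ y ≤ φ x + w.length := by
    intro x y w
    induction w with
    | nil => simp
    | cons hadj w ih =>
      have := hφ _ _ hadj
      rw [Walk.length_cons]
      omega
  by_cases h : G.edist x y = ⊤
  · simp [h]
  · obtain ⟨w, hw⟩ := exists_walk_of_edist_ne_top h
    rw [← hw]
    exact_mod_cast walk_bound w

end SimpleGraph

namespace OVConstr

section PathGraph

variable {B P : Type*} {f g : P → B} {L : P → ℕ}

variable (f g L) in
def pathVert (p : P) (i : ℕ) : Vert B P L :=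
  if h : 0 < i ∧ i < L p then .inr ⟨p, ⟨i - 1, by omega⟩⟩
  else if i = 0 then .inl (f p) else .inl (g p)

theorem pathVert_zero (p : P) : pathVert f g L p 0 = .inl (f p) := by
  simp [pathVert]

theorem pathVert_len {p : P} (hL : 0 < L p) : pathVert f g L p (L p) = .inl (g p) := by
  simp [pathVert, hL.ne']

theorem pathVert_succ (p : P) (k : Fin (L p - 1)) :
    pathVert f g L p (k + 1) = .inr ⟨p, k⟩ := by
  have h : 0 < k.1 + 1 ∧ k.1 + 1 < L p := ⟨k.1.succ_pos, by omega⟩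
  simp only [pathVert, dif_pos h, Nat.add_sub_cancel]

theorem pos_pathVert {p : P} {i : ℕ} (hi : i ≤ L p) (hL : 0 < L p) :
    pos f g L p i (pathVert f g L p i) := by
  by_cases h : 0 < i ∧ i < L p
  · exact .inr (.inr ⟨by omega, h.1, h.2, by simp [pathVert, h]⟩)
  · obtain rfl | rfl : i = 0 ∨ i = L p := by omega
    · exact .inl ⟨rfl, pathVert_zero p⟩
    · exact .inr (.inl ⟨rfl, pathVert_len hL⟩)

theorem pathGraph_adj_pathVert {p : P} (hfg : f p ≠ g p) {i : ℕ} (hi : i < L p) :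
    (pathGraph f g L).Adj (pathVert f g L p i) (pathVert f g L p (i + 1)) := by
  have hne : pathVert f g L p i ≠ pathVert f g L p (i + 1) := by
    unfold pathVert
    split_ifs <;> simp_all; omega
  exact ⟨hne, p, i, hi, .inl ⟨pos_pathVert hi.le (by omega), pos_pathVert hi (by omega)⟩⟩

theorem pathGraph_edist_pathVert_le {p : P} (hfg : f p ≠ g p) {i j : ℕ} (hij : i ≤ j)
    (hj : j ≤ L p) :
    (pathGraph f g L).edist (pathVert f g L p i) (pathVert f g L p j) ≤ ↑(j - i) := by
  induction j, hij using Nat.le_induction with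
  | base => simp
  | succ j hij ih =>
    exact (pathGraph f g L).edist_le_of_le_add_s8 (ih (by omega))
      (SimpleGraph.edist_eq_one_iff_adj.mpr (pathGraph_adj_pathVert hfg hj)).le (by omega)

theorem pathGraph_edist_endpoints_le {p : P} (hfg : f p ≠ g p) (hL : 0 < L p) :
    (pathGraph f g L).edist (.inl (f p)) (.inl (g p)) ≤ L p := by
  simpa [pathVert_zero, pathVert_len hL] using
    pathGraph_edist_pathVert_le (L := L) hfg (Nat.zero_le _) le_rfl

/-- An internal vertex is within `d` of `x` as soon as the detours through the two ends of
its path, of total length `m + L p + n`, average to at most `d`. -/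
theorem pathGraph_edist_inr_le {p : P} (hfg : f p ≠ g p) (k : Fin (L p - 1))
    {x : Vert B P L} {m n d : ℕ} (hm : (pathGraph f g L).edist x (.inl (f p)) ≤ m)
    (hn : (pathGraph f g L).edist x (.inl (g p)) ≤ n) (hd : m + L p + n ≤ 2 * d) :
    (pathGraph f g L).edist x (.inr ⟨p, k⟩) ≤ d := by
  have hk := k.isLt
  by_cases hleft : m + (k + 1) ≤ d
  · have h := pathGraph_edist_pathVert_le (L := L) hfg (Nat.zero_le (k + 1)) (by omega)
    rw [pathVert_zero, pathVert_succ] at h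
    exact (pathGraph f g L).edist_le_of_le_add_s8 hm h (by omega)
  · have h := pathGraph_edist_pathVert_le (L := L) hfg (i := k + 1) (by omega) le_rfl
    rw [pathVert_succ, pathVert_len (by omega), SimpleGraph.edist_comm] at h
    exact (pathGraph f g L).edist_le_of_le_add_s8 hn h (by omega)

theorem pathGraph_edist_le_of_base (hfg : ∀ p, f p ≠ g p) {x : Vert B P L} (r : B → ℕ)
    {d : ℕ} (hr : ∀ b, (pathGraph f g L).edist x (.inl b) ≤ r b) (hrd : ∀ b, r b ≤ d)
    (hpath : ∀ p, r (f p) + L p + r (g p) ≤ 2 * d) (z : Vert B P L) :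
    (pathGraph f g L).edist x z ≤ d := by
  rcases z with b | ⟨p, k⟩
  · exact (hr b).trans (by exact_mod_cast hrd b)
  · exact pathGraph_edist_inr_le (hfg p) k (hr _) (hr _) (hpath p)

variable (f g L) in
/-- The largest extension of a potential `φ` on the base vertices that grows by at most one
along every edge of every path. -/
def pathPotential (φ : B → ℕ) : Vert B P L → ℕ
  | .inl b => φ b
  | .inr ⟨p, k⟩ => min (φ (f p) + (k + 1)) (φ (g p) + (L p - (k + 1)))

theorem pathPotential_of_pos {φ : B → ℕ} {p : P} (hφ : φ (f p) ≤ φ (g p) + L p ∧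
    φ (g p) ≤ φ (f p) + L p) {i : ℕ} {z : Vert B P L} (hz : pos f g L p i z) :
    pathPotential f g L φ z = min (φ (f p) + i) (φ (g p) + (L p - i)) := by
  rcases hz with ⟨rfl, rfl⟩ | ⟨rfl, rfl⟩ | ⟨-, hi0, hiL, rfl⟩ <;>
    simp only [pathPotential] <;> omega

theorem pathPotential_adj_le {φ : B → ℕ}
    (hφ : ∀ p, φ (f p) ≤ φ (g p) + L p ∧ φ (g p) ≤ φ (f p) + L p) {x y : Vert B P L}
    (hxy : (pathGraph f g L).Adj x y) :
    pathPotential f g L φ y ≤ pathPotential f g L φ x + 1 := by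
  obtain ⟨-, p, i, -, ⟨hx, hy⟩ | ⟨hy, hx⟩⟩ := hxy
  all_goals
    rw [pathPotential_of_pos (hφ p) hx, pathPotential_of_pos (hφ p) hy]
    omega

theorem pathGraph_le_add_edist_of_base (φ : B → ℕ)
    (hφ : ∀ p, φ (f p) ≤ φ (g p) + L p ∧ φ (g p) ≤ φ (f p) + L p) (b b' : B) :
    (φ b' : ℕ∞) ≤ φ b + (pathGraph f g L).edist (.inl b) (.inl b') :=
  (pathGraph f g L).le_add_edist_of_adj_le (pathPotential f g L φ)
    (fun _ _ => pathPotential_adj_le hφ) (.inl b) (.inl b')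

end PathGraph

section TwoOV

variable {a ℓ : ℕ} {U : Set (Fin ℓ → Bool)} {v : Fin ℓ → Bool}

theorem e0_ne_e1 (p : Pth ℓ U v) : e0 p ≠ e1 p := by
  cases p <;> simp [e0, e1]

theorem H_edist_endpoints_le (ha : 0 < a) (p : Pth ℓ U v) :
    (H a ℓ U v).edist (.inl (e0 p)) (.inl (e1 p)) ≤ len a p :=
  pathGraph_edist_endpoints_le (e0_ne_e1 p) (by cases p <;> simp [len] <;> omega)

variable (a) in
def sDistUpper : Base ℓ U → ℕ
  | .s => 0
  | .cL _ | .cR _ => 2 * a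
  | .uLa _ | .uRa _ => a + 1
  | .uL0 _ | .uR0 _ => 2 * a + 1

variable (a) in
def sDistLower : Base ℓ U → ℕ
  | .s => 0
  | .cL _ | .cR _ => 1
  | .uLa _ | .uRa _ => a + 1
  | .uL0 _ | .uR0 _ => 2 * a + 1

theorem H_edist_s_le_sDistUpper (ha : 0 < a) (hyes : ∀ u ∈ U, ∃ c, u c = true ∧ v c = true)
    (b : Base ℓ U) : (H a ℓ U v).edist (.inl .s) (.inl b) ≤ sDistUpper a b := by
  have path := H_edist_endpoints_le (U := U) (v := v) ha
  have htop : ∀ u : U, (H a ℓ U v).edist (.inl .s) (.inl (.uLa u)) ≤ ↑(a + 1) ∧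
      (H a ℓ U v).edist (.inl .s) (.inl (.uRa u)) ≤ ↑(a + 1) := by
    intro u
    obtain ⟨c, huc, hvc⟩ := hyes u u.2
    have hL := path (.ucL u c huc)
    have hR := path (.ucR u c huc)
    rw [SimpleGraph.edist_comm] at hL hR
    exact ⟨(H a ℓ U v).edist_le_of_le_add_s8 (path (.vcL c hvc)) hL (by simp [len]; omega),
      (H a ℓ U v).edist_le_of_le_add_s8 (path (.vcR c hvc)) hR (by simp [len]; omega)⟩
  cases b with
  | s => simp
  | cL c => exact path (.scL c)
  | cR c => exact path (.scR c)
  | uLa u => exact (htop u).1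
  | uRa u => exact (htop u).2
  | uL0 u =>
    have h := path (.uLpath u)
    rw [SimpleGraph.edist_comm] at h
    exact (H a ℓ U v).edist_le_of_le_add_s8 (htop u).1 h (by simp [len, sDistUpper]; omega)
  | uR0 u =>
    have h := path (.uRpath u)
    rw [SimpleGraph.edist_comm] at h
    exact (H a ℓ U v).edist_le_of_le_add_s8 (htop u).2 h (by simp [len, sDistUpper]; omega)

theorem H_edist_s_le (ha : 0 < a) (hyes : ∀ u ∈ U, ∃ c, u c = true ∧ v c = true)
    (y : Vert (Base ℓ U) (Pth ℓ U v) (len a)) :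
    (H a ℓ U v).edist (.inl .s) y ≤ ↑(2 * a + 1) :=
  pathGraph_edist_le_of_base e0_ne_e1 (sDistUpper a) (H_edist_s_le_sDistUpper ha hyes)
    (fun b => by cases b <;> simp only [sDistUpper] <;> omega)
    (fun p => by cases p <;> simp only [sDistUpper, e0, e1, len] <;> omega) y

theorem H_le_edist_s_uL0 (ha : 0 < a) (u : U) :
    ↑(2 * a + 1) ≤ (H a ℓ U v).edist (.inl .s) (.inl (.uL0 u)) := by
  simpa [H, sDistLower] using pathGraph_le_add_edist_of_base (L := len a) (sDistLower a)
    (fun p => by cases p <;> simp only [sDistLower, e0, e1, len] <;> omega) .s (.uL0 u)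

end TwoOV

end OVConstr

open OVConstr in
theorem two_ov_graph_yes_case_general
    (a ℓ : ℕ) (ha : 0 < a)
    (U : Set (Fin ℓ → Bool)) (hU : U.Nonempty)
    (v : Fin ℓ → Bool)
    (hyes : ∀ u ∈ U, ∃ c, u c = true ∧ v c = true) :
    ecc a ℓ U v (Sum.inl Base.s) = ((2 * a + 1 : ℕ) : ℕ∞) ∧
      (H a ℓ U v).ediam ≤ ((4 * a + 2 : ℕ) : ℕ∞) := by
  obtain ⟨u, hu⟩ := hU
  refine ⟨le_antisymm (iSup_le (H_edist_s_le ha hyes))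
    (le_iSup_of_le _ (H_le_edist_s_uL0 ha ⟨u, hu⟩)), ?_⟩
  refine SimpleGraph.ediam_le_of_edist_le fun x y => ?_
  have hx := H_edist_s_le ha hyes x
  rw [SimpleGraph.edist_comm] at hx
  exact (H a ℓ U v).edist_le_of_le_add_s8 hx (H_edist_s_le ha hyes y) (by omega)

open OVConstr in
theorem two_ov_graph_yes_case
    (a ℓ : ℕ) (ha : 0 < a) (hℓ : 0 < ℓ)
    (U : Set (Fin ℓ → Bool)) (hUfin : U.Finite) (hU : U.Nonempty)
    (hUone : ∀ u ∈ U, ∃ c, u c = true) (v : Fin ℓ → Bool)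
    (hyes : ∀ u ∈ U, ∃ c, u c = true ∧ v c = true) :
    ecc a ℓ U v (Sum.inl Base.s) = ((2 * a + 1 : ℕ) : ℕ∞) ∧
      (H a ℓ U v).ediam ≤ ((4 * a + 2 : ℕ) : ℕ∞) :=
  two_ov_graph_yes_case_general a ℓ ha U hU v hyes
end
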